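/- arXiv:1509.08392 — 5 statements merged into one kernel-verified Lean document; each statement's English description precedes it below -/
import Mathlib

section
/- Let A ∈ ℝ^{n×n} be diagonalizable with a simple real eigenvalue λ₁ satisfying λ₁ > Re(λⱼ) for all other eigenvalues λⱼ, and suppose the right eigenvector v¹ and left eigenvector w¹ associated to λ₁ are entrywise strictly positive. Then for every nonzero entrywise nonnegative x ∈ ℝⁿ there exists τ₀ ≥ 0 such that exp(tA)x is entrywise strictly positive for all t ≥ τ₀. -/
/-!
Diagonalize `A = P D P⁻¹` over `ℂ`. Since `λ₁` is simple and strictly dominant,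
`exp (t (A - λ₁))` converges as `t → ∞` to the spectral projection `P E P⁻¹`, where `E` keeps only
the `λ₁`-entry of `D`. The transformed eigenvectors `P⁻¹ v` and `wᵀ P` are supported on that entry,
which makes the projection the rank-one matrix `v wᵀ / (w ⬝ v)`. Hence
`e^{-λ₁ t} exp (t A) x → (w ⬝ x) / (w ⬝ v) • v`, a strictly positive vector, because `w > 0` and
`x ≥ 0` is nonzero.
-/

open Matrix Polynomial Finset Filter Topology NormedSpace

theorem Complex.tendsto_exp_ofReal_mul_atTop {z : ℂ} (hz : z.re < 0) :
    Tendsto (fun t : ℝ => Complex.exp (t * z)) atTop (𝓝 0) := by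
  refine Complex.tendsto_exp_comap_re_atBot.comp (tendsto_comap_iff.mpr ?_)
  simpa [Function.comp_def] using tendsto_id.atTop_mul_const_of_neg hz

namespace Matrix

variable {ι : Type*} [Fintype ι] [DecidableEq ι]

section Field

variable {K : Type*} [Field K] {B P : Matrix ι ι K} {d : ι → K}

theorem card_filter_eq_rootMultiplicity_of_eq_conj_diagonal [DecidableEq K] (hP : IsUnit P.det)
    (hB : B = P * diagonal d * P⁻¹) (μ : K) :
    #{j | d j = μ} = B.charpoly.rootMultiplicity μ := by
  obtain ⟨u, rfl⟩ := (isUnit_iff_isUnit_det P).mpr hP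
  have hprod : ∏ j, (X - C (d j)) = ((univ.val.map d).map fun a => X - C a).prod := by
    rw [Multiset.map_map]; rfl
  rw [hB, charpoly_units_conj, charpoly_diagonal, ← count_roots, hprod,
    roots_multiset_prod_X_sub_C, Multiset.count_map]
  simp [Finset.card, eq_comm]

theorem existsUnique_eq_of_rootMultiplicity_eq_one [DecidableEq K] (hP : IsUnit P.det)
    (hB : B = P * diagonal d * P⁻¹) {μ : K} (h : B.charpoly.rootMultiplicity μ = 1) :
    ∃! j, d j = μ := by
  obtain ⟨j₀, hj₀⟩ := card_eq_one.mp
    ((card_filter_eq_rootMultiplicity_of_eq_conj_diagonal hP hB μ).trans h)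
  refine ⟨j₀, ?_, fun j hj => ?_⟩ <;> simp_all [Finset.eq_singleton_iff_unique_mem]

theorem spectrum_eq_range_of_eq_conj_diagonal (hP : IsUnit P.det)
    (hB : B = P * diagonal d * P⁻¹) :
    spectrum K B = Set.range d := by
  obtain ⟨u, rfl⟩ := (isUnit_iff_isUnit_det P).mpr hP
  rw [hB, ← coe_units_inv, spectrum.units_conjugate, spectrum_diagonal]

variable {μ : K} {j₀ : ι}

theorem eq_single_of_diagonal_mulVec_eq_smul (hj₀ : ∀ j ≠ j₀, d j ≠ μ) {z : ι → K}
    (hz : diagonal d *ᵥ z = μ • z) : z = Pi.single j₀ (z j₀) := by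
  ext j
  rcases eq_or_ne j j₀ with rfl | hj
  · simp
  have h := congrFun hz j
  rw [mulVec_diagonal, Pi.smul_apply, smul_eq_mul] at h
  have hmul : (d j - μ) * z j = 0 := by linear_combination h
  rw [Pi.single_eq_of_ne hj]
  exact (mul_eq_zero.mp hmul).resolve_left (sub_ne_zero.mpr (hj₀ j hj))

variable {v w : ι → K}

theorem inv_mulVec_eq_single_of_eq_conj_diagonal (hP : IsUnit P.det)
    (hB : B = P * diagonal d * P⁻¹) (hj₀ : ∀ j ≠ j₀, d j ≠ μ) (hv : B *ᵥ v = μ • v) :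
    P⁻¹ *ᵥ v = Pi.single j₀ ((P⁻¹ *ᵥ v) j₀) := by
  refine eq_single_of_diagonal_mulVec_eq_smul hj₀ ?_
  rw [mulVec_mulVec, ← one_mul (diagonal d), ← nonsing_inv_mul P hP, mul_assoc, mul_assoc,
    ← mul_assoc P, ← hB, ← mulVec_mulVec, hv, mulVec_smul]

theorem vecMul_eq_single_of_eq_conj_diagonal (hP : IsUnit P.det)
    (hB : B = P * diagonal d * P⁻¹) (hj₀ : ∀ j ≠ j₀, d j ≠ μ) (hw : w ᵥ* B = μ • w) :
    w ᵥ* P = Pi.single j₀ ((w ᵥ* P) j₀) := by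
  refine eq_single_of_diagonal_mulVec_eq_smul hj₀ ?_
  rw [← vecMul_transpose, diagonal_transpose, vecMul_vecMul, ← mul_one (P * diagonal d),
    ← nonsing_inv_mul P hP, ← mul_assoc, ← hB, ← vecMul_vecMul, hw, smul_vecMul]

theorem smul_conj_diagonal_single_eq_vecMulVec (hP : IsUnit P.det)
    (hB : B = P * diagonal d * P⁻¹) (hj₀ : ∀ j ≠ j₀, d j ≠ μ) (hv : B *ᵥ v = μ • v)
    (hw : w ᵥ* B = μ • w) :
    (w ⬝ᵥ v) • (P * diagonal (Pi.single j₀ 1) * P⁻¹) = vecMulVec v w := by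
  obtain ⟨a, hz⟩ : ∃ a, P⁻¹ *ᵥ v = Pi.single j₀ a :=
    ⟨_, inv_mulVec_eq_single_of_eq_conj_diagonal hP hB hj₀ hv⟩
  obtain ⟨b, hy⟩ : ∃ b, w ᵥ* P = Pi.single j₀ b :=
    ⟨_, vecMul_eq_single_of_eq_conj_diagonal hP hB hj₀ hw⟩
  have hv' : v = P *ᵥ Pi.single j₀ a := by
    rw [← hz, mulVec_mulVec, mul_nonsing_inv P hP, one_mulVec]
  have hw' : w = Pi.single j₀ b ᵥ* P⁻¹ := by
    rw [← hy, vecMul_vecMul, mul_nonsing_inv P hP, vecMul_one]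
  have hwv : w ⬝ᵥ v = b * a := by
    rw [hv', dotProduct_mulVec, hy, single_dotProduct, Pi.single_eq_same]
  rw [hwv, hv', hw']
  ext i k
  simp only [diagonal, Pi.single_apply, smul_apply, mul_apply, of_apply, mul_ite, mul_one, mul_zero,
    sum_ite_eq', mem_univ, ↓reduceIte, ite_mul, zero_mul, smul_eq_mul, mulVec_single,
    op_smul_eq_smul, single_vecMul, vecMulVec_apply, Pi.smul_apply, col_apply, row_apply]
  ring

end Field

theorem tendsto_exp_smul_sub_of_eq_conj_diagonal {B P : Matrix ι ι ℂ} {d : ι → ℂ}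
    (hP : IsUnit P.det) (hB : B = P * diagonal d * P⁻¹) {μ : ℂ} {j₀ : ι} (hdj₀ : d j₀ = μ)
    (hre : ∀ j ≠ j₀, (d j).re < μ.re) :
    Tendsto (fun t : ℝ => exp (t • (B - μ • 1))) atTop
      (𝓝 (P * diagonal (Pi.single j₀ 1) * P⁻¹)) := by
  have hexp (t : ℝ) :
      exp (t • (B - μ • 1)) = P * diagonal (fun j => Complex.exp (t * (d j - μ))) * P⁻¹ := by
    have hconj : t • (B - μ • 1) = P * diagonal (fun j => t * (d j - μ)) * P⁻¹ := by
      have hdiag : diagonal (fun j => (t : ℂ) * (d j - μ)) = (t : ℂ) • (diagonal d - μ • 1) := by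
        ext i j
        rcases eq_or_ne i j with rfl | hij <;> simp [*]
      rw [hdiag, hB, mul_smul_comm, smul_mul_assoc, mul_sub, sub_mul, mul_smul_comm, mul_one,
        smul_mul_assoc, mul_nonsing_inv _ hP, Complex.coe_smul]
    rw [hconj, exp_conj _ _ ((isUnit_iff_isUnit_det P).mpr hP), exp_diagonal, Pi.exp_def,
      ← Complex.exp_eq_exp_ℂ]
  simp_rw [hexp]
  refine ((continuous_const.matrix_mul continuous_id.matrix_diagonal).matrix_mul
    continuous_const).tendsto _ |>.comp (tendsto_pi_nhds.mpr fun j => ?_)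
  rcases eq_or_ne j j₀ with rfl | hj
  · simp [hdj₀]
  · simpa [hj] using Complex.tendsto_exp_ofReal_mul_atTop (by simpa using hre j hj)

theorem exp_map_algebraMap (M : Matrix ι ι ℝ) :
    (exp M).map (algebraMap ℝ ℂ) = exp (M.map (algebraMap ℝ ℂ)) :=
  open scoped Norms.Operator in
  map_exp (algebraMap ℝ ℂ).mapMatrix (continuous_id.matrix_map (continuous_algebraMap ℝ ℂ)) M

theorem exp_add_smul_one (A : Matrix ι ι ℝ) (μ : ℝ) :
    exp (A + μ • 1) = Real.exp μ • exp A := by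
  have hμ : exp (μ • 1 : Matrix ι ι ℝ) = Real.exp μ • 1 := by
    rw [smul_one_eq_diagonal, exp_diagonal, Pi.exp_def, ← smul_one_eq_diagonal, Real.exp_eq_exp_ℝ]
  rw [exp_add_of_commute _ _ ((Commute.one_right A).smul_right μ), hμ, mul_smul_one]

theorem tendsto_exp_smul_sub_smul_one_of_map_eq_conj_diagonal {A : Matrix ι ι ℝ}
    {P : Matrix ι ι ℂ} {d : ι → ℂ} (hP : IsUnit P.det)
    (hA : A.map (algebraMap ℝ ℂ) = P * diagonal d * P⁻¹) {μ : ℝ} {j₀ : ι} (hdj₀ : d j₀ = μ)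
    (hre : ∀ j ≠ j₀, (d j).re < μ) {v w : ι → ℝ} (hv : A *ᵥ v = μ • v) (hw : w ᵥ* A = μ • w)
    (hwv : w ⬝ᵥ v ≠ 0) :
    Tendsto (fun t : ℝ => exp (t • (A - μ • 1))) atTop (𝓝 ((w ⬝ᵥ v)⁻¹ • vecMulVec v w)) := by
  set f := algebraMap ℝ ℂ
  have hvℂ : A.map f *ᵥ (f ∘ v) = (μ : ℂ) • (f ∘ v) := funext fun i => by
    rw [← RingHom.map_mulVec, hv]
    simp [f]
  have hwℂ : (f ∘ w) ᵥ* A.map f = (μ : ℂ) • (f ∘ w) := funext fun i => by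
    rw [← RingHom.map_vecMul, hw]
    simp [f]
  have hrank := smul_conj_diagonal_single_eq_vecMulVec hP hA
    (fun j hj h => (hre j hj).ne (by simp [h])) hvℂ hwℂ
  have hlim := tendsto_exp_smul_sub_of_eq_conj_diagonal hP hA (μ := μ) hdj₀ (by simpa using hre)
  have hmap (t : ℝ) : (exp (t • (A - μ • 1))).map f = exp (t • (A.map f - (μ : ℂ) • 1)) := by
    rw [exp_map_algebraMap]
    congr 1
    ext i j
    rcases eq_or_ne i j with rfl | hij <;> simp [f, *]
  have hproj : P * diagonal (Pi.single j₀ 1) * P⁻¹ = ((w ⬝ᵥ v)⁻¹ • vecMulVec v w).map f := by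
    have hwvℂ : f ∘ w ⬝ᵥ f ∘ v = f (w ⬝ᵥ v) := (RingHom.map_dotProduct f w v).symm
    rw [← inv_smul_smul₀ ((map_ne_zero f).mpr hwv) (P * _ * _), ← hwvℂ, hrank, hwvℂ]
    ext i j
    simp [f, vecMulVec_apply]
  -- `exp (t • (A - μ • 1))` is real, so it converges to the real part of the complex limit.
  have hreal := ((continuous_id.matrix_map Complex.continuous_re).tendsto _).comp hlim
  simp_rw [← hmap, hproj] at hreal
  convert hreal using 2 <;> ext <;> simp [f]

end Matrix

theorem stmt_2_general {n : ℕ} (A : Matrix (Fin n) (Fin n) ℝ) (lam₁ : ℝ)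
    (v w : Fin n → ℝ)
    (hdiag : ∃ (P : Matrix (Fin n) (Fin n) ℂ) (d : Fin n → ℂ), IsUnit P.det ∧
      A.map (algebraMap ℝ ℂ) = P * Matrix.diagonal d * P⁻¹)
    (hsimple : A.charpoly.rootMultiplicity lam₁ = 1)
    (hdom : ∀ μ : ℂ, μ ∈ spectrum ℂ (A.map (algebraMap ℝ ℂ)) → μ ≠ (lam₁ : ℂ) →
      μ.re < lam₁)
    (hv : A.mulVec v = lam₁ • v) (hw : Matrix.vecMul w A = lam₁ • w)
    (hvpos : ∀ i, 0 < v i) (hwpos : ∀ i, 0 < w i) :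
    ∀ x : Fin n → ℝ, (∀ i, 0 ≤ x i) → x ≠ 0 →
      ∃ τ₀ : ℝ, 0 ≤ τ₀ ∧ ∀ t : ℝ, τ₀ ≤ t → ∀ i,
        0 < (NormedSpace.exp (t • A)).mulVec x i := by
  intro x hx hx0
  obtain ⟨P, d, hP, hPD⟩ := hdiag
  obtain ⟨j₀, hdj₀, hj₀⟩ := existsUnique_eq_of_rootMultiplicity_eq_one hP hPD
    (μ := algebraMap ℝ ℂ lam₁)
    (by rwa [charpoly_map, ← eq_rootMultiplicity_map (algebraMap ℝ ℂ).injective])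
  have hre (j) (hj : j ≠ j₀) : (d j).re < lam₁ :=
    hdom _ (spectrum_eq_range_of_eq_conj_diagonal hP hPD ▸ ⟨j, rfl⟩) (mt (hj₀ j) hj)
  obtain ⟨i₀, hi₀⟩ := Function.ne_iff.mp hx0
  have hwv : 0 < w ⬝ᵥ v := sum_pos (fun i _ => mul_pos (hwpos i) (hvpos i)) ⟨i₀, mem_univ _⟩
  have hwx : 0 < w ⬝ᵥ x :=
    sum_pos' (fun i _ => mul_nonneg (hwpos i).le (hx i))
      ⟨i₀, mem_univ _, mul_pos (hwpos i₀) ((hx i₀).lt_of_ne' hi₀)⟩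
  have hlim : Tendsto (fun t : ℝ => exp (t • (A - lam₁ • 1)) *ᵥ x) atTop
      (𝓝 (((w ⬝ᵥ v)⁻¹ * (w ⬝ᵥ x)) • v)) := by
    have := ((continuous_id.matrix_mulVec (continuous_const (y := x))).tendsto _).comp
      (tendsto_exp_smul_sub_smul_one_of_map_eq_conj_diagonal hP hPD hdj₀ hre hv hw hwv.ne')
    simpa [Function.comp_def, smul_mulVec, vecMulVec_mulVec, mul_smul] using this
  obtain ⟨τ, hτ⟩ := eventually_atTop.mp <| eventually_all.mpr fun i =>
    (tendsto_pi_nhds.mp hlim i).eventually <| eventually_gt_nhds <|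
      mul_pos (mul_pos (inv_pos.mpr hwv) hwx) (hvpos i)
  refine ⟨max τ 0, le_max_right _ _, fun t ht i => ?_⟩
  have hsplit : t • A = t • (A - lam₁ • 1) + (t * lam₁) • 1 := by module
  rw [hsplit, exp_add_smul_one, smul_mulVec, Pi.smul_apply, smul_eq_mul]
  exact mul_pos (Real.exp_pos _) (hτ t (le_of_max_le_left ht) i)

/-- For a diagonalizable matrix `A` with a simple real dominant eigenvalue `λ₁` whose
right and left eigenvectors are strictly positive, every trajectory `exp(tA) x` from a
nonzero nonnegative initial condition is eventually entrywise strictly positive. -/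
theorem stmt_2 {n : ℕ} (A : Matrix (Fin n) (Fin n) ℝ) (lam₁ : ℝ)
    (v w : Fin n → ℝ)
    (hdiag : ∃ (P : Matrix (Fin n) (Fin n) ℂ) (d : Fin n → ℂ), IsUnit P.det ∧
      A.map (algebraMap ℝ ℂ) = P * Matrix.diagonal d * P⁻¹)
    (hsimple : A.charpoly.rootMultiplicity lam₁ = 1)
    (heig : lam₁ ∈ spectrum ℝ A)
    (hdom : ∀ μ : ℂ, μ ∈ spectrum ℂ (A.map (algebraMap ℝ ℂ)) → μ ≠ (lam₁ : ℂ) →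
      μ.re < lam₁)
    (hv : A.mulVec v = lam₁ • v) (hw : Matrix.vecMul w A = lam₁ • w)
    (hvpos : ∀ i, 0 < v i) (hwpos : ∀ i, 0 < w i) :
    ∀ x : Fin n → ℝ, (∀ i, 0 ≤ x i) → x ≠ 0 →
      ∃ τ₀ : ℝ, 0 ≤ τ₀ ∧ ∀ t : ℝ, τ₀ ≤ t → ∀ i,
        0 < (NormedSpace.exp (t • A)).mulVec x i :=
  stmt_2_general A lam₁ v w hdiag hsimple hdom hv hw hvpos hwpos
end

section
/- If A ∈ ℝ^{n×n} is Hurwitz and C·exp(tA) is entrywise nonnegative for all t ≥ 0 where C ∈ ℝ^{k×n}, then −C A⁻¹ is entrywise nonnegative. -/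
/-!
On a generalized eigenspace of the complexified matrix,
`exp (t A) v = e^{tμ} ∑_{j<K} t^j/j! (A - μ)^j v`, which tends to `0` because `Re μ < 0`;
as the generalized eigenspaces span, `exp (t A) → 0`.
Since `d/dt (C exp (t A) A⁻¹) = C exp (t A) ≥ 0`, each entry of `C exp (t A) A⁻¹` increases on
`[0, ∞)` from its value `C A⁻¹` at `t = 0` to its limit `0`, so `C A⁻¹ ≤ 0`.
-/

open Matrix Filter Topology NormedSpace
open scoped Nat

theorem tendsto_cexp_mul_mul_pow_atTop_nhds_zero {μ : ℂ} (hμ : μ.re < 0) (j : ℕ) :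
    Tendsto (fun T : ℝ => Complex.exp (T * μ) * (T : ℂ) ^ j) atTop (𝓝 0) := by
  rw [tendsto_zero_iff_norm_tendsto_zero]
  refine (tendsto_rpow_mul_exp_neg_mul_atTop_nhds_zero j (-μ.re) (neg_pos.2 hμ)).congr' ?_
  filter_upwards [eventually_ge_atTop 0] with T hT
  simp [Complex.norm_exp, abs_of_nonneg hT, mul_comm]

theorem Module.End.mem_spectrum_of_mem_maxGenEigenspace {K V : Type*} [Field K]
    [AddCommGroup V] [Module K V] [FiniteDimensional K V] {f : Module.End K V} {μ : K} {v : V}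
    (hv : v ∈ f.maxGenEigenspace μ) (hv0 : v ≠ 0) : μ ∈ spectrum K f := by
  rw [← hasUnifEigenvalue_iff_mem_spectrum]
  exact HasUnifEigenvalue.lt zero_lt_one ((Submodule.ne_bot_iff _).2 ⟨v, hv, hv0⟩)

namespace Matrix

variable {ι : Type*} [Fintype ι] [DecidableEq ι]

section Exponential

-- `exp` is defined from the topology alone; any submultiplicative norm gives access to its API.
attribute [local instance] Matrix.linftyOpNormedRing Matrix.linftyOpNormedAlgebra

theorem exp_mulVec_of_pow_mulVec_eq_zero {N : Matrix ι ι ℂ} {K : ℕ} {v : ι → ℂ}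
    (hv : N ^ K *ᵥ v = 0) :
    exp N *ᵥ v = ∑ j ∈ Finset.range K, ((j ! : ℂ)⁻¹) • (N ^ j *ᵥ v) := by
  have hsum := (exp_series_hasSum_exp' (𝕂 := ℂ) N).map (mulVec.addMonoidHomLeft v)
    (continuous_id.matrix_mulVec continuous_const)
  refine hsum.unique (hasSum_sum_of_ne_finset_zero (s := Finset.range K) fun j hj => ?_) |>.trans ?_
  · have hKj : K ≤ j := by simpa using hj
    simp [mulVec.addMonoidHomLeft, ← pow_sub_mul_pow N hKj, smul_mulVec, ← mulVec_mulVec, hv]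
  · simp [mulVec.addMonoidHomLeft, smul_mulVec]

theorem exp_smul_mulVec_of_pow_mulVec_eq_zero {M : Matrix ι ι ℂ} {μ : ℂ} {K : ℕ}
    {v : ι → ℂ} (hv : (M - μ • 1) ^ K *ᵥ v = 0) (c : ℂ) :
    exp (c • M) *ᵥ v = ∑ j ∈ Finset.range K,
      (Complex.exp (c * μ) * c ^ j / j !) • ((M - μ • 1) ^ j *ᵥ v) := by
  set N := M - μ • 1
  have hsplit : c • M = c • N + algebraMap ℂ _ (c * μ) := by
    rw [Algebra.algebraMap_eq_smul_one, ← smul_smul, ← smul_add, sub_add_cancel]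
  have hcN : (c • N) ^ K *ᵥ v = 0 := by rw [smul_pow, smul_mulVec, hv, smul_zero]
  have hexp : exp (algebraMap ℂ (Matrix ι ι ℂ) (c * μ)) =
      algebraMap ℂ _ (Complex.exp (c * μ)) := by
    rw [Complex.exp_eq_exp_ℂ]
    exact (algebraMap_exp_comm _).symm
  rw [hsplit, exp_add_of_commute _ _ (Algebra.commutes (c * μ) (c • N)).symm, hexp,
    ← Algebra.commutes, ← Algebra.smul_def, smul_mulVec, exp_mulVec_of_pow_mulVec_eq_zero hcN,
    Finset.smul_sum]
  refine Finset.sum_congr rfl fun j _ => ?_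
  rw [smul_pow, smul_mulVec, smul_smul, smul_smul]
  ring_nf

theorem tendsto_exp_smul_mulVec_of_pow_mulVec_eq_zero {M : Matrix ι ι ℂ} {μ : ℂ}
    (hμ : μ.re < 0) {K : ℕ} {v : ι → ℂ} (hv : (M - μ • 1) ^ K *ᵥ v = 0) :
    Tendsto (fun T : ℝ => exp ((T : ℂ) • M) *ᵥ v) atTop (𝓝 0) := by
  simp_rw [exp_smul_mulVec_of_pow_mulVec_eq_zero hv]
  simpa using tendsto_finsetSum (Finset.range K) fun j _ =>
    ((tendsto_cexp_mul_mul_pow_atTop_nhds_zero hμ j).div_const (j ! : ℂ)).smul_const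
      ((M - μ • 1) ^ j *ᵥ v)

theorem tendsto_exp_smul_mulVec_of_spectrum_re_neg {M : Matrix ι ι ℂ}
    (hM : ∀ μ ∈ spectrum ℂ M, μ.re < 0) (v : ι → ℂ) :
    Tendsto (fun T : ℝ => exp ((T : ℂ) • M) *ᵥ v) atTop (𝓝 0) := by
  have hv : v ∈ ⨆ μ, Module.End.maxGenEigenspace (toLinAlgEquiv' M) μ := by
    rw [Module.End.iSup_maxGenEigenspace_eq_top]
    exact Submodule.mem_top
  induction hv using Submodule.iSup_induction' with
  | mem μ w hw =>
    rcases eq_or_ne w 0 with rfl | hw0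
    · simp
    obtain ⟨K, hK⟩ := (Module.End.mem_maxGenEigenspace _ _ _).1 hw
    have hμ : μ ∈ spectrum ℂ M := by
      rw [← AlgEquiv.spectrum_eq toLinAlgEquiv' M]
      exact Module.End.mem_spectrum_of_mem_maxGenEigenspace hw hw0
    refine tendsto_exp_smul_mulVec_of_pow_mulVec_eq_zero (hM μ hμ) (K := K) ?_
    rwa [← toLinAlgEquiv'_apply, map_pow, map_sub, map_smul, map_one]
  | zero => simp
  | add x y _ _ hx hy => simpa [mulVec_add] using hx.add hy

theorem tendsto_exp_smul_of_spectrum_re_neg {M : Matrix ι ι ℂ}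
    (hM : ∀ μ ∈ spectrum ℂ M, μ.re < 0) :
    Tendsto (fun T : ℝ => exp ((T : ℂ) • M)) atTop (𝓝 0) := by
  refine tendsto_pi_nhds.2 fun p => tendsto_pi_nhds.2 fun q => ?_
  simpa [mulVec_single_one] using
    tendsto_pi_nhds.1 (tendsto_exp_smul_mulVec_of_spectrum_re_neg hM (Pi.single q 1)) p

theorem exp_smul_eq_map_re_exp_smul_map_ofReal (A : Matrix ι ι ℝ) (T : ℝ) :
    exp (T • A) = (exp ((T : ℂ) • A.map (algebraMap ℝ ℂ))).map Complex.re := by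
  have hcont : Continuous ((algebraMap ℝ ℂ).mapMatrix : Matrix ι ι ℝ →+* Matrix ι ι ℂ) :=
    continuous_id.matrix_map Complex.continuous_ofReal
  have hsmul : (T : ℂ) • A.map (algebraMap ℝ ℂ) = (algebraMap ℝ ℂ).mapMatrix (T • A) := by
    ext; simp
  calc exp (T • A) = ((algebraMap ℝ ℂ).mapMatrix (exp (T • A))).map Complex.re := by ext; simp
    _ = _ := by rw [hsmul]; exact congrArg (Matrix.map · Complex.re) (map_exp _ hcont (T • A))

theorem tendsto_exp_smul_of_spectrum_map_re_neg {A : Matrix ι ι ℝ}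
    (hA : ∀ μ ∈ spectrum ℂ (A.map (algebraMap ℝ ℂ)), μ.re < 0) :
    Tendsto (fun T : ℝ => exp (T • A)) atTop (𝓝 0) := by
  simp_rw [exp_smul_eq_map_re_exp_smul_map_ofReal A]
  simpa [Function.comp_def] using
    ((continuous_id.matrix_map Complex.continuous_re).tendsto 0).comp
      (tendsto_exp_smul_of_spectrum_re_neg hA)

theorem hasDerivAt_mul_exp_smul_mul_inv_apply {κ : Type*} (C : Matrix κ ι ℝ)
    {A : Matrix ι ι ℝ} (hA : IsUnit A.det) (i : κ) (j : ι) (t : ℝ) :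
    HasDerivAt (fun T : ℝ => (C * exp (T • A) * A⁻¹) i j) ((C * exp (t • A)) i j) t := by
  let L : Matrix ι ι ℝ →L[ℝ] ℝ := LinearMap.toContinuousLinearMap <|
    entryLinearMap ℝ ℝ i j ∘ₗ mulRightLinearMap κ ℝ A⁻¹ ∘ₗ mulLeftLinearMap ι ℝ C
  have hderiv : HasDerivAt (fun T : ℝ => (C * exp (T • A) * A⁻¹) i j)
      ((C * (exp (t • A) * A) * A⁻¹) i j) t :=
    L.hasFDerivAt.comp_hasDerivAt t (hasDerivAt_exp_smul_const A t)
  rwa [Matrix.mul_assoc C, Matrix.mul_assoc, mul_nonsing_inv A hA, Matrix.mul_one] at hderiv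

end Exponential

theorem monotoneOn_mul_exp_smul_mul_inv_apply {κ : Type*} {C : Matrix κ ι ℝ}
    {A : Matrix ι ι ℝ} (hA : IsUnit A.det)
    (hpos : ∀ t : ℝ, 0 ≤ t → ∀ i j, 0 ≤ (C * exp (t • A)) i j) (i : κ) (j : ι) :
    MonotoneOn (fun T : ℝ => (C * exp (T • A) * A⁻¹) i j) (Set.Ici 0) := by
  have hderiv := hasDerivAt_mul_exp_smul_mul_inv_apply C hA i j
  refine monotoneOn_of_hasDerivWithinAt_nonneg (convex_Ici 0)
    (fun t _ => (hderiv t).continuousAt.continuousWithinAt)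
    (fun t _ => (hderiv t).hasDerivWithinAt) fun t ht => ?_
  rw [interior_Ici] at ht
  exact hpos t ht.le i j

theorem isUnit_det_of_zero_notMem_spectrum_map {A : Matrix ι ι ℝ}
    (hA : (0 : ℂ) ∉ spectrum ℂ (A.map (algebraMap ℝ ℂ))) : IsUnit A.det := by
  rw [spectrum.zero_mem_iff, not_not, isUnit_iff_isUnit_det, ← RingHom.mapMatrix_apply,
    ← RingHom.map_det] at hA
  simpa [isUnit_iff_ne_zero] using hA

end Matrix

/-- If `A` is Hurwitz and `C * exp(tA)` is entrywise nonnegative for all `t ≥ 0`, then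
`−C A⁻¹` is entrywise nonnegative. -/
theorem stmt_10 {n k : ℕ} (A : Matrix (Fin n) (Fin n) ℝ) (C : Matrix (Fin k) (Fin n) ℝ)
    (hHurwitz : ∀ μ : ℂ, μ ∈ spectrum ℂ (A.map (algebraMap ℝ ℂ)) → μ.re < 0)
    (hpos : ∀ t : ℝ, 0 ≤ t → ∀ i j, 0 ≤ (C * NormedSpace.exp (t • A)) i j) :
    ∀ i j, 0 ≤ (-(C * A⁻¹)) i j := by
  intro i j
  have hA : IsUnit A.det :=
    isUnit_det_of_zero_notMem_spectrum_map fun h0 => (hHurwitz 0 h0).false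
  have hmono := monotoneOn_mul_exp_smul_mul_inv_apply hA hpos i j
  have hlim : Tendsto (fun T : ℝ => (C * exp (T • A) * A⁻¹) i j) atTop (𝓝 0) := by
    have hcont : Continuous fun X : Matrix (Fin n) (Fin n) ℝ => (C * X * A⁻¹) i j :=
      ((continuous_const.matrix_mul continuous_id).matrix_mul continuous_const).matrix_elem i j
    simpa [Function.comp_def] using
      (hcont.tendsto 0).comp (tendsto_exp_smul_of_spectrum_map_re_neg hHurwitz)
  have hle : (C * A⁻¹) i j ≤ 0 := by
    simpa using ge_of_tendsto hlim
      ((eventually_ge_atTop 0).mono fun T hT => hmono Set.self_mem_Ici hT hT)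
  simpa using hle
end

section
/- Suppose A ∈ ℝ^{n×n} is Hurwitz, exp(tA)B ≥ 0 and C exp(tA) ≥ 0 entrywise for all t ≥ 0, and for every x₀ ≥ 0 there is τ₀ with exp(tA)x₀ ≥ 0 for t ≥ τ₀. Then for every x₀ ≥ 0 and every measurable control u : [0,∞) → ℝ^m with u(t) ≥ 0, the state x(t) = exp(tA)x₀ + ∫₀ᵗ exp((t−s)A)B u(s) ds satisfies x(t) ≥ 0 for all t ≥ τ₀, and the output y(t) = C x(t) satisfies y(t) ≥ 0 for all t ≥ 0, provided additionally C ≥ 0. -/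
open Matrix MeasureTheory

/-! By variation of constants, `x t = exp(tA) x₀ + ∫₀ᵗ exp((t-s)A) B u(s) ds`. The forced term
integrates the nonnegative kernel `exp((t-s)A) B` against the nonnegative input, so it is
nonnegative for `t ≥ 0`. Adding the free response, nonnegative from `τ₀` on, gives the state
claim; applying `C`, the free response becomes `C exp(tA) x₀ ≥ 0` and the forced term stays
nonnegative because `C ≥ 0`, which gives the output claim. -/

theorem Matrix.mulVec_nonneg {m n R : Type*} [Fintype n] [Semiring R] [PartialOrder R]
    [IsOrderedRing R] {M : Matrix m n R} {v : n → R} (hM : ∀ i j, 0 ≤ M i j) (hv : 0 ≤ v) :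
    0 ≤ M *ᵥ v :=
  fun i => dotProduct_nonneg_of_nonneg (hM i) hv

section ForcedResponse

variable {ι κ : Type*} [Fintype ι] [DecidableEq ι] [Fintype κ]

noncomputable def forcedResponse (A : Matrix ι ι ℝ) (B : Matrix ι κ ℝ) (u : ℝ → κ → ℝ)
    (t : ℝ) : ι → ℝ :=
  fun i => ∫ s in (0 : ℝ)..t, ((NormedSpace.exp ((t - s) • A) * B) *ᵥ u s) i

theorem forcedResponse_nonneg {A : Matrix ι ι ℝ} {B : Matrix ι κ ℝ} {u : ℝ → κ → ℝ} {t : ℝ}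
    (hB : ∀ t : ℝ, 0 ≤ t → ∀ i j, 0 ≤ (NormedSpace.exp (t • A) * B) i j)
    (hu : ∀ s, 0 ≤ u s) (ht : 0 ≤ t) : 0 ≤ forcedResponse A B u t :=
  fun i => intervalIntegral.integral_nonneg ht fun s hs =>
    mulVec_nonneg (hB (t - s) (sub_nonneg.mpr hs.2)) (hu s) i

end ForcedResponse

theorem stmt_11_general {n m k : ℕ} (A : Matrix (Fin n) (Fin n) ℝ)
    (B : Matrix (Fin n) (Fin m) ℝ) (C : Matrix (Fin k) (Fin n) ℝ)
    (hB : ∀ t : ℝ, 0 ≤ t → ∀ i j, 0 ≤ (NormedSpace.exp (t • A) * B) i j)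
    (hC : ∀ t : ℝ, 0 ≤ t → ∀ i j, 0 ≤ (C * NormedSpace.exp (t • A)) i j)
    (hC0 : ∀ i j, 0 ≤ C i j)
    (x₀ : Fin n → ℝ) (hx₀ : ∀ i, 0 ≤ x₀ i)
    (τ₀ : ℝ) (hτ₀ : 0 ≤ τ₀)
    (hev : ∀ t : ℝ, τ₀ ≤ t → ∀ i, 0 ≤ (NormedSpace.exp (t • A)).mulVec x₀ i)
    (u : ℝ → Fin m → ℝ) (hu : ∀ s i, 0 ≤ u s i)
    (x : ℝ → Fin n → ℝ)
    (hx : ∀ (t : ℝ) (i : Fin n), x t i = (NormedSpace.exp (t • A)).mulVec x₀ i +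
      ∫ s in (0:ℝ)..t, ((NormedSpace.exp ((t - s) • A) * B).mulVec (u s)) i) :
    (∀ t : ℝ, τ₀ ≤ t → ∀ i, 0 ≤ x t i) ∧
    (∀ t : ℝ, 0 ≤ t → ∀ i, 0 ≤ C.mulVec (x t) i) := by
  have hx_eq : ∀ t, x t = NormedSpace.exp (t • A) *ᵥ x₀ + forcedResponse A B u t :=
    fun t => funext (hx t)
  have hforced : ∀ t, 0 ≤ t → 0 ≤ forcedResponse A B u t :=
    fun t => forcedResponse_nonneg hB hu
  refine ⟨fun t ht => ?_, fun t ht => ?_⟩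
  · rw [hx_eq t]
    exact add_nonneg (hev t ht) (hforced t (hτ₀.trans ht))
  · rw [hx_eq t, mulVec_add, mulVec_mulVec]
    exact add_nonneg (mulVec_nonneg (hC t ht) hx₀) (mulVec_nonneg hC0 (hforced t ht))

/-- Sufficiency part of the characterization of internally eventually positive systems:
if `A` is Hurwitz, `exp(tA)B ≥ 0` and `C exp(tA) ≥ 0` for all `t ≥ 0`, `C ≥ 0`, and the
trajectory `exp(tA)x₀` of the uncontrolled system is nonnegative for `t ≥ τ₀`, then for
any nonnegative control the state is nonnegative for `t ≥ τ₀` and the output is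
nonnegative for all `t ≥ 0`. -/
theorem stmt_11 {n m k : ℕ} (A : Matrix (Fin n) (Fin n) ℝ)
    (B : Matrix (Fin n) (Fin m) ℝ) (C : Matrix (Fin k) (Fin n) ℝ)
    (hHurwitz : ∀ μ : ℂ, μ ∈ spectrum ℂ (A.map (algebraMap ℝ ℂ)) → μ.re < 0)
    (hB : ∀ t : ℝ, 0 ≤ t → ∀ i j, 0 ≤ (NormedSpace.exp (t • A) * B) i j)
    (hC : ∀ t : ℝ, 0 ≤ t → ∀ i j, 0 ≤ (C * NormedSpace.exp (t • A)) i j)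
    (hC0 : ∀ i j, 0 ≤ C i j)
    (x₀ : Fin n → ℝ) (hx₀ : ∀ i, 0 ≤ x₀ i)
    (τ₀ : ℝ) (hτ₀ : 0 ≤ τ₀)
    (hev : ∀ t : ℝ, τ₀ ≤ t → ∀ i, 0 ≤ (NormedSpace.exp (t • A)).mulVec x₀ i)
    (u : ℝ → Fin m → ℝ) (hu : ∀ s i, 0 ≤ u s i)
    (hmeas : ∀ (t : ℝ) (i : Fin n), IntervalIntegrable
      (fun s => ((NormedSpace.exp ((t - s) • A) * B).mulVec (u s)) i)
      MeasureTheory.volume 0 t)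
    (x : ℝ → Fin n → ℝ)
    (hx : ∀ (t : ℝ) (i : Fin n), x t i = (NormedSpace.exp (t • A)).mulVec x₀ i +
      ∫ s in (0:ℝ)..t, ((NormedSpace.exp ((t - s) • A) * B).mulVec (u s)) i) :
    (∀ t : ℝ, τ₀ ≤ t → ∀ i, 0 ≤ x t i) ∧
    (∀ t : ℝ, 0 ≤ t → ∀ i, 0 ≤ C.mulVec (x t) i) :=
  stmt_11_general A B C hB hC hC0 x₀ hx₀ τ₀ hτ₀ hev u hu x hx
end

section
/- If for every x₀ ∈ ℝⁿ with x₀ ≥ 0 and every nonnegative integrable control u the output y(t) = C exp(tA)x₀ + C∫₀ᵗ exp((t−s)A)Bu(s) ds is nonnegative for all t ≥ 0, then C exp(tA) is entrywise nonnegative for all t ≥ 0 and C exp(tA) B is entrywise nonnegative for all t ≥ 0. -/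
open Matrix MeasureTheory

/-!
With zero control and initial state `eⱼ` the output is the `j`-th column of `C exp(tA)`.
With zero initial state and control `φ(s) eⱼ` the output is `∫₀ᵗ φ(s) h(t - s) ds` for the
continuous entry `h(σ) = (C exp(σA) B)ᵢⱼ`; if `h` were negative at some `t₀ ≥ 0`, it would be
negative near `t₀`, and a nonnegative bump `φ` concentrated near `0` would make this integral
negative at time slightly after `t₀`.
-/

theorem Matrix.continuous_exp_smul {ι : Type*} [Fintype ι] [DecidableEq ι]
    (A : Matrix ι ι ℝ) : Continuous fun t : ℝ => NormedSpace.exp (t • A) := by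
  let : NormedRing (Matrix ι ι ℝ) := Matrix.linftyOpNormedRing
  let : NormedAlgebra ℝ (Matrix ι ι ℝ) := Matrix.linftyOpNormedAlgebra
  let : NormedAlgebra ℚ (Matrix ι ι ℝ) := NormedAlgebra.restrictScalars ℚ ℝ _
  exact NormedSpace.exp_continuous.comp (continuous_id.smul continuous_const)

theorem Matrix.nonneg_of_mulVec_nonneg {ι κ : Type*} [Fintype κ] [DecidableEq κ]
    {M : Matrix ι κ ℝ} (hM : ∀ x : κ → ℝ, 0 ≤ x → 0 ≤ M *ᵥ x) (i : ι) (j : κ) :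
    0 ≤ M i j := by
  simpa using hM (Pi.single j 1) (Pi.single_nonneg.2 zero_le_one) i

theorem nonneg_of_forall_integral_mul_comp_sub_nonneg {h : ℝ → ℝ} (hh : Continuous h)
    (H : ∀ φ : ℝ → ℝ, Continuous φ → 0 ≤ φ →
      ∀ t, 0 ≤ t → 0 ≤ ∫ s in (0:ℝ)..t, φ s * h (t - s))
    {t₀ : ℝ} (ht₀ : 0 ≤ t₀) : 0 ≤ h t₀ := by
  by_contra! hneg
  obtain ⟨δ, hδ, hball⟩ := Metric.eventually_nhds_iff_ball.1
    (hh.continuousAt.eventually_lt continuousAt_const hneg)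
  -- A tent supported on `[0, δ/2]`, read at time `t₀ + δ/2`, only sees `h` on `(t₀, t₀ + δ/2]`.
  set ε := δ / 2 with hε
  set φ : ℝ → ℝ := fun s => max 0 (ε - s)
  have hφ : Continuous φ := continuous_const.max (continuous_const.sub continuous_id)
  have hg : Continuous fun s => φ s * h (t₀ + ε - s) :=
    hφ.mul (hh.comp (continuous_const.sub continuous_id))
  have hle : ∀ s ∈ Set.Ioc 0 (t₀ + ε), φ s * h (t₀ + ε - s) ≤ 0 := by
    intro s hs
    rcases lt_or_ge s ε with hsε | hεs
    · refine mul_nonpos_of_nonneg_of_nonpos (le_max_left _ _) (hball _ ?_).le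
      rw [Metric.mem_ball, Real.dist_eq, abs_lt]
      constructor <;> linarith [hs.1, hs.2]
    · simp [φ, hεs]
  have hlt : φ 0 * h (t₀ + ε - 0) < 0 := by
    refine mul_neg_of_pos_of_neg (by simp [φ, ε, hδ]) (hball _ ?_)
    rw [Metric.mem_ball, Real.dist_eq, sub_zero, add_sub_cancel_left, abs_of_pos (by positivity)]
    linarith
  have hint : ∫ s in (0:ℝ)..(t₀ + ε), φ s * h (t₀ + ε - s) < ∫ _ in (0:ℝ)..(t₀ + ε), (0:ℝ) :=
    intervalIntegral.integral_lt_integral_of_continuousOn_of_le_of_exists_lt (by positivity)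
      hg.continuousOn continuousOn_const hle ⟨0, ⟨le_rfl, by positivity⟩, hlt⟩
  have := H φ hφ (fun s => le_max_left _ _) (t₀ + ε) (by positivity)
  simp only [intervalIntegral.integral_zero] at hint
  linarith

/-- Necessity part of the characterization of externally/eventually positive systems: if
the output `y(t) = C exp(tA) x₀ + ∫₀ᵗ C exp((t−s)A) B u(s) ds` is nonnegative for every
nonnegative initial condition and every continuous nonnegative control, then
`C exp(tA) ≥ 0` and `C exp(tA) B ≥ 0` entrywise for all `t ≥ 0`. -/
theorem stmt_12 {n m k : ℕ} (A : Matrix (Fin n) (Fin n) ℝ)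
    (B : Matrix (Fin n) (Fin m) ℝ) (C : Matrix (Fin k) (Fin n) ℝ)
    (hpos : ∀ (x₀ : Fin n → ℝ), (∀ i, 0 ≤ x₀ i) →
      ∀ (u : ℝ → Fin m → ℝ), Continuous (fun s => u s) → (∀ s i, 0 ≤ u s i) →
      ∀ t : ℝ, 0 ≤ t → ∀ i : Fin k,
        0 ≤ (C.mulVec ((NormedSpace.exp (t • A)).mulVec x₀)) i +
          ∫ s in (0:ℝ)..t, ((C * NormedSpace.exp ((t - s) • A) * B).mulVec (u s)) i) :
    (∀ t : ℝ, 0 ≤ t → ∀ i j, 0 ≤ (C * NormedSpace.exp (t • A)) i j) ∧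
    (∀ t : ℝ, 0 ≤ t → ∀ i j, 0 ≤ (C * NormedSpace.exp (t • A) * B) i j) := by
  refine ⟨fun t ht => Matrix.nonneg_of_mulVec_nonneg fun x hx i => ?_, fun t ht i j => ?_⟩
  · simpa [Matrix.mulVec_mulVec] using
      hpos x hx (fun _ => 0) continuous_const (fun _ _ => le_rfl) t ht i
  · refine nonneg_of_forall_integral_mul_comp_sub_nonneg
      (((continuous_const.matrix_mul (Matrix.continuous_exp_smul A)).matrix_mul
        continuous_const).matrix_elem i j) (fun φ hφ hφ_nonneg τ hτ => ?_) ht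
    have := hpos 0 (fun _ => le_rfl) (fun s => φ s • Pi.single j 1)
      (hφ.smul continuous_const) (fun s l => smul_nonneg (hφ_nonneg s)
        ((Pi.single_nonneg.2 zero_le_one : (0 : Fin m → ℝ) ≤ _) l)) τ hτ i
    simpa [Matrix.mulVec_smul] using this
end

section
/- Suppose A ∈ ℝ^{n×n} and there exist ζ ∈ ℝⁿ with ζ ≫ 0 and vectors satisfying Aζ + B𝟏 ≪ 0 and Cζ + D𝟏 ≪ γ𝟏, where −CA⁻¹ ≥ 0 entrywise and A is invertible. Then (D − CA⁻¹B)𝟏 ≪ γ𝟏. -/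
open Matrix

/-- Sufficiency step in the `L∞`-induced norm characterization: if `ζ ≫ 0` satisfies
`Aζ + B𝟏 ≪ 0` and `Cζ + D𝟏 ≪ γ𝟏`, and `−CA⁻¹ ≥ 0` entrywise, then
`(D − CA⁻¹B)𝟏 ≪ γ𝟏`. -/
theorem stmt_16 {n m k : ℕ} (A : Matrix (Fin n) (Fin n) ℝ)
    (B : Matrix (Fin n) (Fin m) ℝ) (C : Matrix (Fin k) (Fin n) ℝ)
    (D : Matrix (Fin k) (Fin m) ℝ) (γ : ℝ) (hγ : 0 < γ)
    (hinv : IsUnit A.det)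
    (hCA : ∀ i j, 0 ≤ (-(C * A⁻¹)) i j)
    (ζ : Fin n → ℝ) (hζ : ∀ i, 0 < ζ i)
    (h1 : ∀ i, A.mulVec ζ i + B.mulVec (fun _ => (1:ℝ)) i < 0)
    (h2 : ∀ i, C.mulVec ζ i + D.mulVec (fun _ => (1:ℝ)) i < γ) :
    ∀ i, (D - C * A⁻¹ * B).mulVec (fun _ => (1:ℝ)) i < γ := by
  intro i
  set M := -(C * A⁻¹) with hM
  set v : Fin n → ℝ := fun j => A.mulVec ζ j + B.mulVec (fun _ => (1:ℝ)) j with hv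
  have hMv : ∀ i, M.mulVec v i ≤ 0 := by
    intro i
    rw [Matrix.mulVec, dotProduct]
    apply Finset.sum_nonpos
    intro j _
    exact mul_nonpos_of_nonneg_of_nonpos (hCA i j) (h1 j).le
  have hMA : M * A = -C := by
    rw [hM, Matrix.neg_mul, Matrix.mul_assoc, Matrix.nonsing_inv_mul A hinv, Matrix.mul_one]
  have key : M.mulVec v i = -(C.mulVec ζ i) - (C * A⁻¹ * B).mulVec (fun _ => (1:ℝ)) i := by
    have : M.mulVec v = (M * A).mulVec ζ + (M * B).mulVec (fun _ => (1:ℝ)) := by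
      show M *ᵥ (A *ᵥ ζ + B *ᵥ fun _ => (1:ℝ)) = _
      rw [Matrix.mulVec_add, Matrix.mulVec_mulVec, Matrix.mulVec_mulVec]
    rw [this, hMA]
    simp [hM, Matrix.neg_mul, Matrix.neg_mulVec, Matrix.mul_assoc]
    ring
  have h3 : -(C * A⁻¹ * B).mulVec (fun _ => (1:ℝ)) i ≤ C.mulVec ζ i := by
    have := hMv i
    rw [key] at this
    linarith
  have := h2 i
  rw [Matrix.sub_mulVec, Pi.sub_apply]
  linarith
end
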